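/- Let R be a commutative ring equipped with a ℤ-grading, and let C be a bounded chain complex of graded free R-modules of finite total rank whose differential is homogeneous of degree 0. If the image in R of the ungraded Euler characteristic χ(C) = Σ_i (−1)^i rk(C_i) is a unit of R, then the complex C ⊗_R C* admits a direct summand (as a graded chain complex) isomorphic to t^0 q^0 R, that is, to R concentrated in homological degree 0 with grading shift 0. -/

import Mathlib

noncomputable section

/-!
Framework for STATEMENT 8: finite based graded chain complexes of graded free modules over a
`ℤ`-graded commutative ring `R` (with grading `𝒜 : ℤ → AddSubgroup R`, `[GradedRing 𝒜]`).
A complex is described by the finite homogeneous basis `ι` of the total complex, the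
homological degree `tdeg` and grading shift `qdeg` of each basis element, and the matrix of
the differential.  A matrix entry describing a map `q^a R → q^b R` which is multiplication
by a homogeneous element `r ∈ 𝒜 e` is homogeneous of degree `b - a + e`.
-/

/-- The sign `(-1)^n` for an integer `n`. -/
def pm (n : ℤ) : ℤ := if Even n then 1 else -1

/-- The data of a finite based graded chain complex over a graded ring `R`. -/
structure GRC (R : Type) [CommRing R] where
  /-- basis elements (of all homological degrees together) -/
  ι : Type
  [fin : Fintype ι]
  [dec : DecidableEq ι]
  /-- homological degree of each basis element -/
  tdeg : ι → ℤ
  /-- grading shift of each basis element -/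
  qdeg : ι → ℤ
  /-- the matrix of the differential: `d b a` is the coefficient of `b` in `d(a)` -/
  d : Matrix ι ι R

attribute [instance] GRC.fin GRC.dec

namespace GRC

variable {R : Type} [CommRing R]

/-- A bounded chain complex of graded free modules of finite total rank whose differential is
homogeneous of degree `0` (i.e. the entry from a generator of shift `qdeg a` to one of shift
`qdeg b` is a homogeneous ring element of degree `qdeg a - qdeg b`), raises homological degree
by one, and squares to zero. -/
def IsAdm (𝒜 : ℤ → AddSubgroup R) (K : GRC R) : Prop :=
  (∀ a b, K.d b a ∈ 𝒜 (K.qdeg a - K.qdeg b)) ∧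
  (∀ a b, K.d b a ≠ 0 → K.tdeg b = K.tdeg a + 1) ∧
  K.d * K.d = 0

/-- Tensor product of complexes over `R`, with the Koszul sign convention. -/
def tensor (K K' : GRC R) : GRC R where
  ι := K.ι × K'.ι
  tdeg p := K.tdeg p.1 + K'.tdeg p.2
  qdeg p := K.qdeg p.1 + K'.qdeg p.2
  d p q := (if p.2 = q.2 then K.d p.1 q.1 else 0) +
    (if p.1 = q.1 then pm (K.tdeg q.1) • K'.d p.2 q.2 else 0)

/-- The dual complex: degrees are negated, the differential is transposed. -/
def dual (K : GRC R) : GRC R where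
  ι := K.ι
  tdeg a := -K.tdeg a
  qdeg a := -K.qdeg a
  d := K.d.transpose

/-- The complex `t^0 q^0 R` with a single basis element. -/
def one (R : Type) [CommRing R] : GRC R where
  ι := PUnit
  tdeg _ := 0
  qdeg _ := 0
  d := 0

/-- A chain map `A → B` homogeneous of degree `t` (and homological degree `0`), given by a
matrix: each entry is a homogeneous ring element of the appropriate degree, entries connect
generators of equal homological degree, and the matrix commutes with the differentials. -/
def IsCM (𝒜 : ℤ → AddSubgroup R) (A B : GRC R) (t : ℤ) (f : Matrix B.ι A.ι R) : Prop :=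
  (∀ a b, f b a ∈ 𝒜 (A.qdeg a - B.qdeg b + t)) ∧
  (∀ a b, f b a ≠ 0 → B.tdeg b = A.tdeg a) ∧
  B.d * f = f * A.d

end GRC

/-!
The coevaluation `R → C ⊗ C*`, `1 ↦ ∑ᵢ ±eᵢ ⊗ eᵢ*`, and the evaluation `C ⊗ C* → R`,
`eᵢ ⊗ eⱼ* ↦ ±δᵢⱼ`, are degree-`0` chain maps once the sign on a generator of homological
degree `t` is `(-1)^(t(t-1)/2)` (resp. `(-1)^(t(t+1)/2)`): these are the signs that absorb the
Koszul sign `(-1)^t` in the differential of the tensor product. The composite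
`R → C ⊗ C* → R` is then multiplication by `∑ᵢ (-1)^(tdeg i) = χ(C)`, so dividing the
coevaluation by the unit `χ(C)` splits the evaluation; `χ(C)⁻¹` stays homogeneous of degree `0`
because the inverse of a degree-`0` unit is its own degree-`0` component.
-/

theorem pm_succ (n : ℤ) : pm (n + 1) = -pm n := by
  unfold pm
  by_cases h : Even n <;> simp [h]

theorem pm_mul_self (n : ℤ) : pm n * pm n = 1 := by
  unfold pm; split_ifs <;> norm_num

/-- `(-1) ^ (t * (t - 1) / 2)`, which only depends on `t` modulo `4`. -/
def pmChoose2 (t : ℤ) : ℤ := if t % 4 = 0 ∨ t % 4 = 1 then 1 else -1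

theorem pmChoose2_succ (t : ℤ) : pmChoose2 (t + 1) = pm t * pmChoose2 t := by
  unfold pmChoose2 pm
  simp only [Int.even_iff]
  split_ifs <;> first | (exfalso; omega) | norm_num

theorem pmChoose2_mul_self (t : ℤ) : pmChoose2 t * pmChoose2 t = 1 := by
  unfold pmChoose2; split_ifs <;> norm_num

theorem pmChoose2_add_pm_succ_mul (t : ℤ) :
    pmChoose2 t + pm (t + 1) * pmChoose2 (t + 1) = 0 := by
  rw [pmChoose2_succ, pm_succ]
  linear_combination (-pmChoose2 t) * pm_mul_self t

theorem pmChoose2_succ_succ_add_pm_mul (t : ℤ) :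
    pmChoose2 (t + 1 + 1) + pm t * pmChoose2 (t + 1) = 0 := by
  rw [pmChoose2_succ (t + 1), pm_succ]
  ring

theorem pmChoose2_succ_mul_self (t : ℤ) : pmChoose2 (t + 1) * pmChoose2 t = pm t := by
  rw [pmChoose2_succ]
  linear_combination pm t * pmChoose2_mul_self t

theorem mem_zero_of_mul_eq_one {ι A σ : Type*} [DecidableEq ι] [AddLeftCancelMonoid ι]
    [Semiring A] [SetLike σ A] [AddSubmonoidClass σ A] (𝒜 : ι → σ) [GradedRing 𝒜]
    {u v : A} (hu : u ∈ 𝒜 0) (huv : u * v = 1) (hvu : v * u = 1) : v ∈ 𝒜 0 := by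
  set v₀ : A := (DirectSum.decompose 𝒜 v 0 : A)
  have huv₀ : u * v₀ = 1 := by
    rw [← DirectSum.coe_decompose_mul_add_of_left_mem 𝒜 hu, add_zero, huv,
      DirectSum.decompose_of_mem_same 𝒜 SetLike.GradedOne.one_mem]
  have hv : v = v₀ := calc
    v = v * (u * v₀) := by rw [huv₀, mul_one]
    _ = v₀ := by rw [← mul_assoc, hvu, one_mul]
  exact hv ▸ SetLike.coe_mem _

namespace GRC

variable {R : Type} [CommRing R]

theorem IsCM.smul {𝒜 : ℤ → AddSubgroup R} [SetLike.GradedMonoid 𝒜] {A B : GRC R} {t : ℤ}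
    {f : Matrix B.ι A.ι R} (hf : IsCM 𝒜 A B t f) {c : R} (hc : c ∈ 𝒜 0) :
    IsCM 𝒜 A B t (c • f) := by
  obtain ⟨hq, ht, hd⟩ := hf
  refine ⟨fun a b => ?_, fun a b hab => ht a b (right_ne_zero_of_mul hab), ?_⟩
  · simpa using SetLike.GradedMul.mul_mem hc (hq a b)
  · rw [Matrix.mul_smul, Matrix.smul_mul, hd]

theorem one_d : (one R).d = 0 := rfl

variable (K : GRC R)

theorem tensor_dual_tdeg_diag (i : K.ι) : (K.tensor K.dual).tdeg (i, i) = 0 :=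
  add_neg_cancel _

theorem tensor_dual_qdeg_diag (i : K.ι) : (K.tensor K.dual).qdeg (i, i) = 0 :=
  add_neg_cancel _

def coev (s : ℤ → ℤ) : Matrix (K.tensor K.dual).ι (one R).ι R :=
  fun (p : K.ι × K.ι) _ => if p.1 = p.2 then (s (K.tdeg p.1) : R) else 0

def ev (s : ℤ → ℤ) : Matrix (one R).ι (K.tensor K.dual).ι R :=
  fun _ (p : K.ι × K.ι) => if p.1 = p.2 then (s (K.tdeg p.1) : R) else 0

theorem tensor_dual_d_mul_coev (s : ℤ → ℤ) (p : (K.tensor K.dual).ι) (u : (one R).ι) :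
    ((K.tensor K.dual).d * K.coev s) p u =
      K.d p.1 p.2 * ((s (K.tdeg p.2) + pm (K.tdeg p.1) * s (K.tdeg p.1) : ℤ) : R) := by
  change ∑ j : K.ι × K.ι, _ = _
  simp only [dual, tensor, Matrix.transpose_apply, zsmul_eq_mul, coev, mul_ite, add_mul, ite_mul,
    zero_mul, mul_zero, Fintype.sum_prod_type, Finset.sum_ite_eq, Finset.mem_univ, ↓reduceIte,
    Finset.sum_add_distrib, Int.cast_add, Int.cast_mul]
  ring

theorem ev_mul_tensor_dual_d (s : ℤ → ℤ) (u : (one R).ι) (q : (K.tensor K.dual).ι) :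
    (K.ev s * (K.tensor K.dual).d) u q =
      K.d q.2 q.1 * ((s (K.tdeg q.2) + pm (K.tdeg q.1) * s (K.tdeg q.1) : ℤ) : R) := by
  change ∑ j : K.ι × K.ι, _ = _
  simp only [ev, dual, tensor, Matrix.transpose_apply, zsmul_eq_mul, mul_add, mul_ite, ite_mul,
    zero_mul, mul_zero, Finset.sum_add_distrib, Fintype.sum_prod_type, Finset.sum_ite_eq',
    Finset.mem_univ, ↓reduceIte, Finset.sum_ite_irrel, Finset.sum_ite_eq, Finset.sum_const_zero,
    Int.cast_add, Int.cast_mul]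
  ring

theorem ev_mul_coev (s s' : ℤ → ℤ) (u u' : (one R).ι) :
    (K.ev s * K.coev s') u u' = ∑ i, ((s (K.tdeg i) * s' (K.tdeg i) : ℤ) : R) := by
  change ∑ j : K.ι × K.ι, _ = _
  simp [Fintype.sum_prod_type, ev, coev]

variable {K} (𝒜 : ℤ → AddSubgroup R) [SetLike.GradedOne 𝒜]

theorem isCM_coev (hd : ∀ a b, K.d b a ≠ 0 → K.tdeg b = K.tdeg a + 1) {s : ℤ → ℤ}
    (hs : ∀ t, s t + pm (t + 1) * s (t + 1) = 0) :
    IsCM 𝒜 (one R) (K.tensor K.dual) 0 (K.coev s) := by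
  refine ⟨fun _ p => ?_, fun _ p hp => ?_, ?_⟩
  · by_cases h : p.1 = p.2
    · obtain ⟨i, j⟩ := p
      cases h
      simpa [coev, tensor_dual_qdeg_diag, one] using SetLike.intCast_mem_graded 𝒜 (s (K.tdeg i))
    · simp [coev, h]
  · obtain ⟨i, j⟩ := p
    obtain rfl : i = j := by by_contra h; simp [coev, h] at hp
    exact tensor_dual_tdeg_diag K i
  · ext p u
    rw [tensor_dual_d_mul_coev, one_d, Matrix.mul_zero, Matrix.zero_apply]
    by_cases h0 : K.d p.1 p.2 = 0
    · rw [h0, zero_mul]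
    · rw [hd _ _ h0, hs, Int.cast_zero, mul_zero]

theorem isCM_ev (hd : ∀ a b, K.d b a ≠ 0 → K.tdeg b = K.tdeg a + 1) {s : ℤ → ℤ}
    (hs : ∀ t, s (t + 1) + pm t * s t = 0) : IsCM 𝒜 (K.tensor K.dual) (one R) 0 (K.ev s) := by
  refine ⟨fun p _ => ?_, fun p _ hp => ?_, ?_⟩
  · by_cases h : p.1 = p.2
    · obtain ⟨i, j⟩ := p
      cases h
      simpa [ev, tensor_dual_qdeg_diag, one] using SetLike.intCast_mem_graded 𝒜 (s (K.tdeg i))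
    · simp [ev, h]
  · obtain ⟨i, j⟩ := p
    obtain rfl : i = j := by by_contra h; simp [ev, h] at hp
    exact (tensor_dual_tdeg_diag K i).symm
  · ext u q
    rw [ev_mul_tensor_dual_d, one_d, Matrix.zero_mul, Matrix.zero_apply]
    by_cases h0 : K.d q.2 q.1 = 0
    · rw [h0, zero_mul]
    · rw [hd _ _ h0, hs, Int.cast_zero, mul_zero]

end GRC

/-- if the ungraded Euler characteristic of `C` is a unit of the `ℤ`-graded
commutative ring `R`, then `C ⊗_R C*` admits `t^0 q^0 R` as a direct summand of graded
chain complexes, i.e. (by the splitting lemma) there are homogeneous chain maps of degree `0`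
`f : t^0 q^0 R → C ⊗_R C*` and `g : C ⊗_R C* → t^0 q^0 R` with `g ∘ f = id`. -/
theorem statement8 (R : Type) [CommRing R] (𝒜 : ℤ → AddSubgroup R) [GradedRing 𝒜]
    (K : GRC R) (hK : K.IsAdm 𝒜)
    (hchi : IsUnit (((∑ x : K.ι, pm (K.tdeg x)) : ℤ) : R)) :
    ∃ (f : Matrix (K.tensor K.dual).ι (GRC.one R).ι R)
      (g : Matrix (GRC.one R).ι (K.tensor K.dual).ι R),
      GRC.IsCM 𝒜 (GRC.one R) (K.tensor K.dual) 0 f ∧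
      GRC.IsCM 𝒜 (K.tensor K.dual) (GRC.one R) 0 g ∧
      g * f = 1 := by
  obtain ⟨-, hdeg, -⟩ := hK
  have hχinv : (↑hchi.unit⁻¹ : R) ∈ 𝒜 0 :=
    mem_zero_of_mul_eq_one 𝒜 (SetLike.intCast_mem_graded 𝒜 _) hchi.mul_val_inv hchi.val_inv_mul
  refine ⟨(↑hchi.unit⁻¹ : R) • K.coev pmChoose2, K.ev fun t => pmChoose2 (t + 1),
    (GRC.isCM_coev 𝒜 hdeg pmChoose2_add_pm_succ_mul).smul hχinv,
    GRC.isCM_ev 𝒜 hdeg pmChoose2_succ_succ_add_pm_mul, ?_⟩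
  ext u u'
  obtain rfl : u = u' := PUnit.ext u u'
  rw [Matrix.mul_smul, Matrix.smul_apply, GRC.ev_mul_coev, Matrix.one_apply_eq]
  simp only [pmChoose2_succ_mul_self, smul_eq_mul, ← Int.cast_sum]
  exact hchi.val_inv_mul
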